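/- arXiv:1406.5876 — 6 statements merged into one kernel-verified Lean document; each statement's English description precedes it below -/
import Mathlib

section
/- Consider the two-species Lotka–Volterra system dx/dt = x(a+bx+cy), dy/dt = y(d+ex+fy) with b,f < 0, bf−ce > 0, and an interior fixed point (x*,y*) with x*,y* > 0. Then there exist constants A,B > 0 such that V(x,y) = A(x − x* log x) + B(y − y* log y) is strictly decreasing along any solution with x,y > 0 except at the fixed point; that is, dV/dt = Ab(x−x*)² + (Ac+Be)(x−x*)(y−y*) + Bf(y−y*)² ≤ 0 with equality only at (x*,y*). -/
/-!
With weights `A, B > 0`, the derivative of `V` along a solution is the quadratic form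
`Ab u² + (Ac + Be) u v + Bf v²` in `u = x − x*`, `v = y − y*`, because the fixed-point
equations turn `a + bx + cy` into `b u + c v` and `d + ex + fy` into `e u + f v`.
This form is negative definite exactly when `Ab < 0` and its discriminant is negative,
and `b, f < 0`, `bf > ce` make it possible to choose the ratio `B / A` so that it is.
-/

open Real

theorem quadForm_neg_of_discrim_neg {α β γ u v : ℝ} (hα : α < 0) (hd : discrim α β γ < 0)
    (huv : u ≠ 0 ∨ v ≠ 0) : α * u ^ 2 + β * u * v + γ * v ^ 2 < 0 := by
  have hsq : 4 * α * (α * u ^ 2 + β * u * v + γ * v ^ 2)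
      = (2 * α * u + β * v) ^ 2 - discrim α β γ * v ^ 2 := by
    unfold discrim; ring
  suffices 0 < 4 * α * (α * u ^ 2 + β * u * v + γ * v ^ 2) by nlinarith
  rw [hsq]
  rcases eq_or_ne v 0 with rfl | hv
  · have hu : u ≠ 0 := huv.resolve_right (not_not.mpr rfl)
    have hα0 := hα.ne
    have : 0 < (2 * α * u) ^ 2 := by positivity
    simpa using this
  · nlinarith [sq_nonneg (2 * α * u + β * v), sq_pos_of_ne_zero hv]

theorem quadForm_nonpos_of_discrim_neg {α β γ : ℝ} (hα : α < 0) (hd : discrim α β γ < 0)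
    (u v : ℝ) : α * u ^ 2 + β * u * v + γ * v ^ 2 ≤ 0 := by
  by_cases h : u = 0 ∧ v = 0
  · simp [h.1, h.2]
  · exact (quadForm_neg_of_discrim_neg hα hd (not_and_or.mp h)).le

theorem quadForm_eq_zero_of_discrim_neg {α β γ u v : ℝ} (hα : α < 0) (hd : discrim α β γ < 0)
    (h0 : α * u ^ 2 + β * u * v + γ * v ^ 2 = 0) : u = 0 ∧ v = 0 := by
  by_contra h
  exact (quadForm_neg_of_discrim_neg hα hd (not_and_or.mp h)).ne h0

theorem exists_weights_discrim_neg {b c e f : ℝ} (hbf : 0 < b * f) (hdet : c * e < b * f) :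
    ∃ A B : ℝ, 0 < A ∧ 0 < B ∧ discrim (A * b) (A * c + B * e) (B * f) < 0 := by
  rcases eq_or_ne e 0 with rfl | he
  · have hB : 0 < c ^ 2 / (b * f) + 1 := by positivity
    refine ⟨1, c ^ 2 / (b * f) + 1, one_pos, hB, ?_⟩
    have hBbf : (c ^ 2 / (b * f) + 1) * (b * f) = c ^ 2 + b * f := by
      rw [add_mul, div_mul_cancel₀ _ hbf.ne', one_mul]
    have hval : discrim (1 * b) (1 * c + (c ^ 2 / (b * f) + 1) * 0) ((c ^ 2 / (b * f) + 1) * f)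
        = -3 * c ^ 2 - 4 * (b * f) := by
      unfold discrim; linear_combination (-4) * hBbf
    rw [hval]
    linarith [sq_nonneg c]
  · -- `B = (2bf − ce) / e²` minimises `B ↦ discrim b (c + Be) (Bf)`
    have he2 : 0 < e ^ 2 := by positivity
    have hB : 0 < (2 * (b * f) - c * e) / e ^ 2 := div_pos (by linarith) he2
    refine ⟨1, (2 * (b * f) - c * e) / e ^ 2, one_pos, hB, ?_⟩
    have hval : discrim (1 * b) (1 * c + (2 * (b * f) - c * e) / e ^ 2 * e)
        ((2 * (b * f) - c * e) / e ^ 2 * f) * e ^ 2 = -4 * (b * f) * (b * f - c * e) := by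
      unfold discrim; field_simp; ring
    have hneg : -4 * (b * f) * (b * f - c * e) < 0 := by
      linarith [mul_pos hbf (sub_pos.mpr hdet)]
    rw [← hval] at hneg
    exact neg_of_mul_neg_left hneg he2.le

theorem hasDerivAt_sub_mul_log {x : ℝ → ℝ} {g t : ℝ} (xs : ℝ) (hdx : HasDerivAt x (x t * g) t)
    (hx : x t ≠ 0) :
    HasDerivAt (fun s => x s - xs * log (x s)) ((x t - xs) * g) t := by
  refine (hdx.sub ((hdx.log hx).const_mul xs)).congr_deriv ?_
  field_simp

theorem lotka_volterra_lyapunov_general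
    (a b c d e f xs ys : ℝ)
    (hb : b < 0) (hf : f < 0) (hdet : 0 < b * f - c * e)
    (hfix1 : a + b * xs + c * ys = 0) (hfix2 : d + e * xs + f * ys = 0) :
    ∃ A B : ℝ, 0 < A ∧ 0 < B ∧
      (∀ x y : ℝ, 0 < x → 0 < y →
        (A * b * (x - xs)^2 + (A * c + B * e) * (x - xs) * (y - ys)
            + B * f * (y - ys)^2 ≤ 0 ∧
         (A * b * (x - xs)^2 + (A * c + B * e) * (x - xs) * (y - ys)
            + B * f * (y - ys)^2 = 0 → x = xs ∧ y = ys))) ∧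
      (∀ x y : ℝ → ℝ, (∀ t, 0 < x t) → (∀ t, 0 < y t) →
        (∀ t, HasDerivAt x (x t * (a + b * x t + c * y t)) t) →
        (∀ t, HasDerivAt y (y t * (d + e * x t + f * y t)) t) →
        ∀ t, HasDerivAt
          (fun s => A * (x s - xs * Real.log (x s)) + B * (y s - ys * Real.log (y s)))
          (A * b * (x t - xs)^2 + (A * c + B * e) * (x t - xs) * (y t - ys)
            + B * f * (y t - ys)^2) t) := by
  obtain ⟨A, B, hA, hB, hdisc⟩ :=
    exists_weights_discrim_neg (mul_pos_of_neg_of_neg hb hf) (sub_pos.mp hdet)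
  have hAb : A * b < 0 := mul_neg_of_pos_of_neg hA hb
  refine ⟨A, B, hA, hB, fun x y _ _ => ⟨quadForm_nonpos_of_discrim_neg hAb hdisc _ _, ?_⟩, ?_⟩
  · intro h0
    obtain ⟨hu, hv⟩ := quadForm_eq_zero_of_discrim_neg hAb hdisc h0
    exact ⟨sub_eq_zero.mp hu, sub_eq_zero.mp hv⟩
  · intro x y hx hy hdx hdy t
    refine (((hasDerivAt_sub_mul_log xs (hdx t) (hx t).ne').const_mul A).add
      ((hasDerivAt_sub_mul_log ys (hdy t) (hy t).ne').const_mul B)).congr_deriv ?_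
    linear_combination A * (x t - xs) * hfix1 + B * (y t - ys) * hfix2

/-- **Lyapunov function for the two-species Lotka–Volterra system.**
If `b, f < 0`, `bf − ce > 0` and `(x*, y*)` is an interior fixed point, then for suitable
`A, B > 0` the function `V(x,y) = A(x − x* log x) + B(y − y* log y)` is strictly decreasing
along positive solutions except at the fixed point: its derivative along solutions is the
quadratic form `Ab(x−x*)² + (Ac+Be)(x−x*)(y−y*) + Bf(y−y*)² ≤ 0`, with equality
only at `(x*, y*)`. -/
theorem lotka_volterra_lyapunov
    (a b c d e f xs ys : ℝ)
    (hb : b < 0) (hf : f < 0) (hdet : 0 < b * f - c * e)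
    (hxs : 0 < xs) (hys : 0 < ys)
    (hfix1 : a + b * xs + c * ys = 0) (hfix2 : d + e * xs + f * ys = 0) :
    ∃ A B : ℝ, 0 < A ∧ 0 < B ∧
      (∀ x y : ℝ, 0 < x → 0 < y →
        (A * b * (x - xs)^2 + (A * c + B * e) * (x - xs) * (y - ys)
            + B * f * (y - ys)^2 ≤ 0 ∧
         (A * b * (x - xs)^2 + (A * c + B * e) * (x - xs) * (y - ys)
            + B * f * (y - ys)^2 = 0 → x = xs ∧ y = ys))) ∧
      (∀ x y : ℝ → ℝ, (∀ t, 0 < x t) → (∀ t, 0 < y t) →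
        (∀ t, HasDerivAt x (x t * (a + b * x t + c * y t)) t) →
        (∀ t, HasDerivAt y (y t * (d + e * x t + f * y t)) t) →
        ∀ t, HasDerivAt
          (fun s => A * (x s - xs * Real.log (x s)) + B * (y s - ys * Real.log (y s)))
          (A * b * (x t - xs)^2 + (A * c + B * e) * (x t - xs) * (y t - ys)
            + B * f * (y t - ys)^2) t) :=
  lotka_volterra_lyapunov_general a b c d e f xs ys hb hf hdet hfix1 hfix2
end

section
/- If b,f < 0 and bf − ce > 0, then the symmetric 2×2 matrix Q = [[2Ab, Ac+Be],[Ac+Be, 2Bf]] is negative definite for a suitable choice of A,B > 0. Specifically: if ce < 0 choose A/B = −e/c; if ce > 0 choose A/B = e/c; if ce = 0 (say e = 0) choose A/B sufficiently small. -/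
/-!
Write `(x, y) Q (x, y)ᵀ = p x² + 2 q x y + r y²` with `p = 2Ab`, `q = Ac + Be`, `r = 2Bf`;
it is negative definite as soon as `p < 0` and `q² < p r`, and `q² = (Ac − Be)² + 4ABce`.
For `ce ≠ 0` take `A = |e|`, `B = |c|`: then `Ac + Be = 0` or `Ac − Be = 0` according to the
sign of `ce`, and `q² < pr` reduces to `bf > 0` resp. `bf > ce`. For `ce = 0` the cross term
`4ABce` vanishes, and `A = e² + bf`, `B = c² + bf` make the surviving square `A²c²` or `B²e²`
small against `4ABbf`.
-/

theorem quadratic_form_neg_of_sq_lt {p q r : ℝ} (hp : p < 0) (hdisc : q ^ 2 < p * r) {x y : ℝ}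
    (hxy : x ≠ 0 ∨ y ≠ 0) : p * x ^ 2 + 2 * q * x * y + r * y ^ 2 < 0 := by
  rcases eq_or_ne y 0 with rfl | hy
  · have hx : x ≠ 0 := by simpa using hxy
    nlinarith [sq_pos_of_ne_zero hx]
  · have hcompl : p * (p * x ^ 2 + 2 * q * x * y + r * y ^ 2)
        = (p * x + q * y) ^ 2 + (p * r - q ^ 2) * y ^ 2 := by ring
    have hpos : 0 < p * (p * x ^ 2 + 2 * q * x * y + r * y ^ 2) := by
      rw [hcompl]
      exact add_pos_of_nonneg_of_pos (sq_nonneg _)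
        (mul_pos (sub_pos.mpr hdisc) (sq_pos_of_ne_zero hy))
    exact neg_of_mul_pos_right hpos hp.le

theorem abs_mul_add_abs_mul_eq_zero_of_mul_neg {c e : ℝ} (hce : c * e < 0) :
    |e| * c + |c| * e = 0 := by
  rcases abs_cases c with ⟨hc, _⟩ | ⟨hc, _⟩ <;>
    rcases abs_cases e with ⟨he, _⟩ | ⟨he, _⟩ <;> rw [hc, he] <;> nlinarith

theorem abs_mul_sub_abs_mul_eq_zero_of_mul_pos {c e : ℝ} (hce : 0 < c * e) :
    |e| * c - |c| * e = 0 := by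
  rcases abs_cases c with ⟨hc, _⟩ | ⟨hc, _⟩ <;>
    rcases abs_cases e with ⟨he, _⟩ | ⟨he, _⟩ <;> rw [hc, he] <;> nlinarith

theorem sq_abs_mul_add_abs_mul_lt {b c e f : ℝ} (hbf : 0 < b * f) (hdet : c * e < b * f)
    (hce : c * e ≠ 0) : (|e| * c + |c| * e) ^ 2 < 2 * |e| * b * (2 * |c| * f) := by
  have hAB : 0 < |e| * |c| := by
    rw [← abs_mul, mul_comm]
    exact abs_pos.mpr hce
  have hsq : (|e| * c + |c| * e) ^ 2 = (|e| * c - |c| * e) ^ 2 + 4 * (|e| * |c|) * (c * e) := by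
    ring
  rcases hce.lt_or_gt with hneg | hpos
  · rw [abs_mul_add_abs_mul_eq_zero_of_mul_neg hneg]
    nlinarith
  · rw [hsq, abs_mul_sub_abs_mul_eq_zero_of_mul_pos hpos]
    nlinarith

theorem sq_mul_add_mul_lt_of_mul_eq_zero {b c e f : ℝ} (hbf : 0 < b * f) (hce : c * e = 0) :
    ((e ^ 2 + b * f) * c + (c ^ 2 + b * f) * e) ^ 2
      < 2 * (e ^ 2 + b * f) * b * (2 * (c ^ 2 + b * f) * f) := by
  rcases mul_eq_zero.mp hce with rfl | rfl
  · nlinarith [pow_pos hbf 3, mul_nonneg (sq_nonneg (b * f)) (sq_nonneg e)]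
  · nlinarith [pow_pos hbf 3, mul_nonneg (sq_nonneg (b * f)) (sq_nonneg c)]

/-- **Negative definiteness of the matrix `Q`.**
If `b, f < 0` and `bf − ce > 0`, then for a suitable choice of `A, B > 0` the symmetric
matrix `Q = [[2Ab, Ac+Be], [Ac+Be, 2Bf]]` is negative definite (i.e. the associated
quadratic form is negative away from the origin).  Specifically, if `ce < 0` one may choose
`A/B = −e/c` (so `Ac + Be = 0`), and if `ce > 0` one may choose `A/B = e/c`
(so `Ac − Be = 0`). -/
theorem Q_negative_definite
    (b c e f : ℝ) (hb : b < 0) (hf : f < 0) (hdet : 0 < b * f - c * e) :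
    ∃ A B : ℝ, 0 < A ∧ 0 < B ∧
      (c * e < 0 → A * c + B * e = 0) ∧
      (0 < c * e → A * c - B * e = 0) ∧
      (∀ x y : ℝ, (x ≠ 0 ∨ y ≠ 0) →
        2 * A * b * x^2 + 2 * (A * c + B * e) * x * y + 2 * B * f * y^2 < 0) := by
  have hbf : 0 < b * f := mul_pos_of_neg_of_neg hb hf
  obtain ⟨A, B, hA, hB, hneg, hpos, hdisc⟩ : ∃ A B : ℝ, 0 < A ∧ 0 < B ∧
      (c * e < 0 → A * c + B * e = 0) ∧ (0 < c * e → A * c - B * e = 0) ∧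
      (A * c + B * e) ^ 2 < 2 * A * b * (2 * B * f) := by
    rcases eq_or_ne (c * e) 0 with hce | hce
    · exact ⟨e ^ 2 + b * f, c ^ 2 + b * f, by positivity, by positivity,
        fun h => absurd hce h.ne, fun h => absurd hce h.ne',
        sq_mul_add_mul_lt_of_mul_eq_zero hbf hce⟩
    · exact ⟨|e|, |c|, abs_pos.mpr (right_ne_zero_of_mul hce),
        abs_pos.mpr (left_ne_zero_of_mul hce), abs_mul_add_abs_mul_eq_zero_of_mul_neg,
        abs_mul_sub_abs_mul_eq_zero_of_mul_pos, sq_abs_mul_add_abs_mul_lt hbf (by linarith) hce⟩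
  refine ⟨A, B, hA, hB, hneg, hpos, fun x y hxy => ?_⟩
  exact quadratic_form_neg_of_sq_lt (mul_neg_of_pos_of_neg (by positivity) hb) hdisc hxy
end

section
/- With h(x) the probability that a discrete-time random walk with step distribution p started at x never returns to 0, and v_1,v_2,v_3 independent with distribution p, one has E[h(v_2+v_3−v_1)] = (1 + 1/κ)·E[h(v_1)], where κ = 1/P(v_1+v_2 = 0). In coalescing-walk notation: p(v_1 | v_2+v_3) = (1+1/κ)·p(0|v_1). -/
/-!
The escape function `h` is `p`-harmonic away from `0` and vanishes at `0`, so one step of the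
walk from `x` averages it to `h x + 𝟙[x = 0]·E[h(v)]`. Averaging `h(b + c - a)` first over
`c = v₃`, then over `b = v₂`, the defects contribute `P(v₂ = v₁)·E[h(v)] = (1/κ)·E[h(v)]`, and
what remains is `E[h(-v₁)] = E[h(v₁)]` by symmetry of `p`.
-/

open scoped BigOperators

/-- `hitBy p n x` is the probability that the random walk on `ℤ^d` with step
distribution `p`, started at `x`, hits `0` within `n` steps. -/
noncomputable def hitBy {d : ℕ} (p : (Fin d → ℤ) → ℝ) : ℕ → (Fin d → ℤ) → ℝ
  | 0, x => if x = 0 then 1 else 0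
  | n + 1, x => if x = 0 then 1 else ∑' y, p y * hitBy p n (x + y)

open Filter Topology

theorem Summable.of_tsum_ne_zero {ι : Type*} {f : ι → ℝ} (h : ∑' i, f i ≠ 0) : Summable f :=
  by_contra fun hf => h (tsum_eq_zero_of_not_summable hf)

theorem summable_mul_of_abs_le {ι : Type*} {p f : ι → ℝ} {C : ℝ} (hp : Summable p)
    (hnonneg : ∀ i, 0 ≤ p i) (hf : ∀ i, |f i| ≤ C) : Summable fun i => p i * f i :=
  (hp.mul_right C).of_norm_bounded fun i => by
    rw [Real.norm_eq_abs, abs_mul, abs_of_nonneg (hnonneg i)]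
    exact mul_le_mul_of_nonneg_left (hf i) (hnonneg i)

theorem abs_le_one_of_mem_Icc {x : ℝ} (hx : x ∈ Set.Icc 0 1) : |x| ≤ 1 :=
  abs_le.2 ⟨by linarith [hx.1], hx.2⟩

section HarmonicOffZero

variable {G : Type*} [AddCommGroup G] [DecidableEq G] {p f : G → ℝ}

theorem tsum_mul_add_eq_add_ite (hf0 : f 0 = 0)
    (hharm : ∀ x ≠ 0, ∑' y, p y * f (x + y) = f x) (x : G) :
    ∑' y, p y * f (x + y) = f x + if x = 0 then ∑' y, p y * f y else 0 := by
  by_cases hx : x = 0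
  · simp [hx, hf0]
  · simp [hx, hharm x hx]

theorem tsum_tsum_mul_apply_add_sub {C : ℝ} (hp : Summable p) (hnonneg : ∀ x, 0 ≤ p x)
    (hf : ∀ x, |f x| ≤ C) (hf0 : f 0 = 0) (hharm : ∀ x ≠ 0, ∑' y, p y * f (x + y) = f x) (a : G) :
    ∑' b, ∑' c, p b * p c * f (b + c - a)
      = f (-a) + (if a = 0 then ∑' y, p y * f y else 0) + p a * ∑' y, p y * f y := by
  set S := ∑' y, p y * f y
  have hstep : ∀ x, ∑' y, p y * f (x + y) = f x + if x = 0 then S else 0 :=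
    tsum_mul_add_eq_add_ite hf0 hharm
  have step_c : ∀ b, ∑' c, p b * p c * f (b + c - a)
      = p b * f (-a + b) + if a = b then p a * S else 0 := by
    intro b
    calc ∑' c, p b * p c * f (b + c - a) = p b * ∑' c, p c * f (-a + b + c) := by
          rw [← tsum_mul_left]
          exact tsum_congr fun c => by rw [show b + c - a = -a + b + c by abel]; ring
      _ = _ := by
          rw [hstep]
          simp only [neg_add_eq_zero]
          split_ifs with hab
          · rw [hab]; ring
          · ring
  rw [tsum_congr step_c, (summable_mul_of_abs_le hp hnonneg fun b => hf (-a + b)).tsum_add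
    (hasSum_ite_eq' a _).summable, hstep, tsum_ite_eq']
  simp only [neg_eq_zero]

theorem tsum_tsum_tsum_mul_apply_add_sub {C : ℝ} (hp : Summable p) (hnonneg : ∀ x, 0 ≤ p x)
    (hsymm : ∀ x, p (-x) = p x) (hzero : p 0 = 0) (hf : ∀ x, |f x| ≤ C) (hf0 : f 0 = 0)
    (hharm : ∀ x ≠ 0, ∑' y, p y * f (x + y) = f x) :
    ∑' a, ∑' b, ∑' c, p a * p b * p c * f (b + c - a)
      = (1 + ∑' x, p x * p (-x)) * ∑' a, p a * f a := by
  set S := ∑' a, p a * f a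
  have hneg : ∑' a, p a * f (-a) = S := by
    rw [← (Equiv.neg G).tsum_eq]
    exact tsum_congr fun a => by simp [hsymm]
  have hpp : Summable fun a => p a * p (-a) :=
    summable_mul_of_abs_le hp hnonneg fun a =>
      (abs_of_nonneg (hnonneg (-a))).trans_le (hp.le_tsum (-a) fun y _ => hnonneg y)
  calc ∑' a, ∑' b, ∑' c, p a * p b * p c * f (b + c - a)
      = ∑' a, p a * ∑' b, ∑' c, p b * p c * f (b + c - a) := by
        simp only [← tsum_mul_left, mul_assoc]
    _ = ∑' a, (p a * f (-a) + p a * p (-a) * S) := by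
        refine tsum_congr fun a => ?_
        rw [tsum_tsum_mul_apply_add_sub hp hnonneg hf hf0 hharm, hsymm]
        split_ifs with ha
        · simp [ha, hzero]
        · ring
    _ = (1 + ∑' x, p x * p (-x)) * S := by
        rw [(summable_mul_of_abs_le hp hnonneg fun a => hf (-a)).tsum_add (hpp.mul_right S),
          hneg, tsum_mul_right]
        ring

end HarmonicOffZero

section HittingProbability

variable {d : ℕ} {p : (Fin d → ℤ) → ℝ}

theorem hitBy_apply_zero (n : ℕ) : hitBy p n 0 = 1 := by
  cases n <;> simp [hitBy]

theorem hitBy_mem_Icc (hnonneg : ∀ x, 0 ≤ p x) (hsum : ∑' x, p x = 1) (n : ℕ) :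
    ∀ x, hitBy p n x ∈ Set.Icc (0 : ℝ) 1 := by
  have hp : Summable p := .of_tsum_ne_zero (by simp [hsum])
  induction n with
  | zero => intro x; by_cases hx : x = 0 <;> simp [hitBy, hx]
  | succ n ih =>
    intro x
    by_cases hx : x = 0
    · simp [hitBy, hx]
    simp only [hitBy, hx, if_false]
    refine ⟨tsum_nonneg fun y => mul_nonneg (hnonneg y) (ih _).1, hsum ▸ ?_⟩
    exact (summable_mul_of_abs_le hp hnonneg fun y => abs_le_one_of_mem_Icc (ih _)).tsum_le_tsum
      (fun y => mul_le_of_le_one_right (hnonneg y) (ih _).2) hp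

theorem summable_mul_hitBy_add (hnonneg : ∀ x, 0 ≤ p x) (hsum : ∑' x, p x = 1) (n : ℕ)
    (x : Fin d → ℤ) : Summable fun y => p y * hitBy p n (x + y) :=
  summable_mul_of_abs_le (.of_tsum_ne_zero (by simp [hsum])) hnonneg fun y =>
    abs_le_one_of_mem_Icc (hitBy_mem_Icc hnonneg hsum n _)

theorem hitBy_le_hitBy_succ (hnonneg : ∀ x, 0 ≤ p x) (hsum : ∑' x, p x = 1) (n : ℕ) :
    ∀ x, hitBy p n x ≤ hitBy p (n + 1) x := by
  induction n with
  | zero =>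
    intro x
    by_cases hx : x = 0
    · simp [hitBy, hx]
    simp only [hitBy, hx, if_false]
    exact tsum_nonneg fun y => mul_nonneg (hnonneg y) (hitBy_mem_Icc hnonneg hsum 0 _).1
  | succ n ih =>
    intro x
    by_cases hx : x = 0
    · simp [hitBy, hx]
    rw [hitBy, hitBy, if_neg hx, if_neg hx]
    exact (summable_mul_hitBy_add hnonneg hsum n x).tsum_le_tsum
      (fun y => mul_le_mul_of_nonneg_left (ih _) (hnonneg y))
      (summable_mul_hitBy_add hnonneg hsum (n + 1) x)

theorem bddAbove_range_hitBy (hnonneg : ∀ x, 0 ≤ p x) (hsum : ∑' x, p x = 1) (x : Fin d → ℤ) :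
    BddAbove (Set.range fun n => hitBy p n x) :=
  ⟨1, by rintro _ ⟨n, rfl⟩; exact (hitBy_mem_Icc hnonneg hsum n x).2⟩

theorem tendsto_hitBy_iSup (hnonneg : ∀ x, 0 ≤ p x) (hsum : ∑' x, p x = 1) (x : Fin d → ℤ) :
    Tendsto (fun n => hitBy p n x) atTop (𝓝 (⨆ n, hitBy p n x)) :=
  tendsto_atTop_ciSup (monotone_nat_of_le_succ fun n => hitBy_le_hitBy_succ hnonneg hsum n x)
    (bddAbove_range_hitBy hnonneg hsum x)

theorem iSup_hitBy_mem_Icc (hnonneg : ∀ x, 0 ≤ p x) (hsum : ∑' x, p x = 1) (x : Fin d → ℤ) :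
    ⨆ n, hitBy p n x ∈ Set.Icc (0 : ℝ) 1 :=
  ⟨(hitBy_mem_Icc hnonneg hsum 0 x).1.trans (le_ciSup (bddAbove_range_hitBy hnonneg hsum x) 0),
    ciSup_le fun n => (hitBy_mem_Icc hnonneg hsum n x).2⟩

theorem iSup_hitBy_apply_zero : ⨆ n, hitBy p n 0 = 1 := by
  simp [hitBy_apply_zero]

theorem tsum_mul_iSup_hitBy_add (hnonneg : ∀ x, 0 ≤ p x) (hsum : ∑' x, p x = 1)
    {x : Fin d → ℤ} (hx : x ≠ 0) :
    ∑' y, p y * ⨆ n, hitBy p n (x + y) = ⨆ n, hitBy p n x := by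
  have hp : Summable p := .of_tsum_ne_zero (by simp [hsum])
  have hdom : Tendsto (fun n => ∑' y, p y * hitBy p n (x + y)) atTop
      (𝓝 (∑' y, p y * ⨆ n, hitBy p n (x + y))) :=
    tendsto_tsum_of_dominated_convergence hp
      (fun y => (tendsto_hitBy_iSup hnonneg hsum (x + y)).const_mul (p y))
      (.of_forall fun n y => by
        have hIcc := hitBy_mem_Icc hnonneg hsum n (x + y)
        rw [Real.norm_of_nonneg (mul_nonneg (hnonneg y) hIcc.1)]
        exact mul_le_of_le_one_right (hnonneg y) hIcc.2)
  have hsucc : Tendsto (fun n => hitBy p (n + 1) x) atTop (𝓝 (⨆ n, hitBy p n x)) :=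
    (tendsto_hitBy_iSup hnonneg hsum x).comp (tendsto_add_atTop_nat 1)
  simp only [hitBy, if_neg hx] at hsucc
  exact tendsto_nhds_unique hdom hsucc

theorem tsum_mul_one_sub_iSup_hitBy_add (hnonneg : ∀ x, 0 ≤ p x) (hsum : ∑' x, p x = 1)
    {x : Fin d → ℤ} (hx : x ≠ 0) :
    ∑' y, p y * (1 - ⨆ n, hitBy p n (x + y)) = 1 - ⨆ n, hitBy p n x := by
  have hp : Summable p := .of_tsum_ne_zero (by simp [hsum])
  have hsummable : Summable fun y => p y * ⨆ n, hitBy p n (x + y) :=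
    summable_mul_of_abs_le hp hnonneg fun y =>
      abs_le_one_of_mem_Icc (iSup_hitBy_mem_Icc hnonneg hsum (x + y))
  simp only [mul_one_sub]
  rw [hp.tsum_sub hsummable, hsum, tsum_mul_iSup_hitBy_add hnonneg hsum hx]

end HittingProbability

theorem coalescence_three_step_identity_general
    {d : ℕ} (p : (Fin d → ℤ) → ℝ)
    (hnonneg : ∀ x, 0 ≤ p x) (hsum : ∑' x, p x = 1)
    (hsymm : ∀ x, p (-x) = p x) (hzero : p 0 = 0)
    (h : (Fin d → ℤ) → ℝ)
    (hh : ∀ x, h x = 1 - ⨆ n, hitBy p n x)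
    (κ : ℝ)
    (hκ : κ = (∑' x, p x * p (-x))⁻¹) :
    (∑' a, ∑' b, ∑' c, p a * p b * p c * h (b + c - a))
      = (1 + 1 / κ) * ∑' a, p a * h a := by
  have h_abs_le : ∀ x, |h x| ≤ 1 := fun x => by
    have hIcc := iSup_hitBy_mem_Icc hnonneg hsum x
    rw [hh]
    exact abs_le_one_of_mem_Icc ⟨sub_nonneg.2 hIcc.2, sub_le_self 1 hIcc.1⟩
  have h_zero : h 0 = 0 := by rw [hh, iSup_hitBy_apply_zero, sub_self]
  have h_harmonic : ∀ x ≠ 0, ∑' y, p y * h (x + y) = h x := fun x hx => by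
    simp only [hh]
    exact tsum_mul_one_sub_iSup_hitBy_add hnonneg hsum hx
  rw [tsum_tsum_tsum_mul_apply_add_sub (.of_tsum_ne_zero (by simp [hsum])) hnonneg hsymm hzero
    h_abs_le h_zero h_harmonic, hκ, one_div, inv_inv]

/-- **The identity `p(v₁ | v₂+v₃) = (1 + 1/κ)·p(0|v₁)`.**
With `h(x)` the probability that the walk with step distribution `p` started at `x`
never hits `0`, and `v₁, v₂, v₃` independent with distribution `p`,
`E[h(v₂+v₃−v₁)] = (1 + 1/κ)·E[h(v₁)]`, where `κ = 1/P(v₁+v₂ = 0)`, i.e.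
`1/κ = ∑ₓ p(x)p(−x)`. -/
theorem coalescence_three_step_identity
    {d : ℕ} (hd : 3 ≤ d) (p : (Fin d → ℤ) → ℝ)
    (hnonneg : ∀ x, 0 ≤ p x) (hsum : ∑' x, p x = 1)
    (hsymm : ∀ x, p (-x) = p x) (hzero : p 0 = 0)
    (htrans : ∑' x, p x * (⨆ n, hitBy p n x) < 1)
    (h : (Fin d → ℤ) → ℝ)
    (hh : ∀ x, h x = 1 - ⨆ n, hitBy p n x)
    (κ : ℝ) (hret : 0 < ∑' x, p x * p (-x))
    (hκ : κ = (∑' x, p x * p (-x))⁻¹) :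
    (∑' a, ∑' b, ∑' c, p a * p b * p c * h (b + c - a))
      = (1 + 1 / κ) * ∑' a, p a * h a :=
  coalescence_three_step_identity_general p hnonneg hsum hsymm hzero h hh κ hκ
end

section
/- It is impossible for a 3-strategy game with zero diagonal and all α_i, β_i > 0 (so all three edges have stable mixed equilibria) to have exactly one or zero of the three edge equilibria invadable by the missing strategy. Equivalently: if the numerators of ρ₁ and ρ₂ are both negative, i.e., β₁β₂ + α₁α₃ < α₁β₁ and β₂β₃ + α₁α₂ < α₂β₂, a contradiction follows. (After the projective normalization α₁=α₂=α₃=1, the conditions β₁β₂ + 1 < β₁ and β₂β₃ + 1 < β₂ with all β_i > 0 are inconsistent, since the second forces β₂ > 1 making the first impossible.) -/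
section OrderedRing

variable {R : Type*} [CommRing R] [LinearOrder R] [IsStrictOrderedRing R]

theorem lt_of_add_mul_lt_mul {a b c d : R} (ha : 0 < a) (hd : 0 ≤ d) (h : d + a * b < a * c) :
    b < c :=
  lt_of_mul_lt_mul_left (by linarith) ha.le

theorem not_invasion_numerators_both_neg {α1 α2 α3 β1 β2 β3 : R}
    (hα1 : 0 < α1) (hα2 : 0 < α2) (hα3 : 0 < α3)
    (hβ1 : 0 < β1) (hβ2 : 0 < β2) (hβ3 : 0 < β3) :
    ¬(β1 * β2 + α1 * α3 < α1 * β1 ∧ β2 * β3 + α2 * α1 < α2 * β2) := by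
  rintro ⟨h1, h2⟩
  have hα1β2 : α1 < β2 := lt_of_add_mul_lt_mul hα2 (mul_pos hβ2 hβ3).le h2
  have : α1 * β1 < β1 * β2 + α1 * α3 :=
    calc α1 * β1 = β1 * α1 := mul_comm _ _
      _ < β1 * β2 := mul_lt_mul_of_pos_left hα1β2 hβ1
      _ ≤ β1 * β2 + α1 * α3 := le_add_of_nonneg_right (mul_pos hα1 hα3).le
  exact this.not_gt h1

end OrderedRing

/-- **Impossibility of one or zero invadable edge equilibria.**
For a three-strategy game with zero diagonal and all `αᵢ, βᵢ > 0` (so that all three edges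
carry stable mixed equilibria), it is impossible that the numerators of `ρ₁` and `ρ₂` are
both negative, i.e. that `β₁β₂ + α₁α₃ < α₁β₁` and `β₂β₃ + α₂α₁ < α₂β₂` hold
simultaneously; hence at least two of the three edge equilibria are invadable.  In the
projectively normalized form `α₁ = α₂ = α₃ = 1`: for `β₁, β₂, β₃ > 0` the conditions
`β₁β₂ + 1 < β₁` and `β₂β₃ + 1 < β₂` are inconsistent. -/
theorem no_two_noninvadable_edges
    (α1 α2 α3 β1 β2 β3 : ℝ)
    (hα1 : 0 < α1) (hα2 : 0 < α2) (hα3 : 0 < α3)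
    (hβ1 : 0 < β1) (hβ2 : 0 < β2) (hβ3 : 0 < β3) :
    ¬(β1 * β2 + α1 * α3 < α1 * β1 ∧ β2 * β3 + α2 * α1 < α2 * β2) ∧
    (∀ b1 b2 b3 : ℝ, 0 < b1 → 0 < b2 → 0 < b3 →
      ¬(b1 * b2 + 1 < b1 ∧ b2 * b3 + 1 < b2)) := by
  refine ⟨not_invasion_numerators_both_neg hα1 hα2 hα3 hβ1 hβ2 hβ3, ?_⟩
  intro b1 b2 b3 hb1 hb2 hb3
  simpa using not_invasion_numerators_both_neg one_pos one_pos one_pos hb1 hb2 hb3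
end

section
/- Let H be a 3×3 game with zero diagonal, interior equilibrium ρ, and H_{ij} + H_{ji} = γ + η_{ij} for i ≠ j with γ > 0 and max_{i,j}|η_{ij}| < γ/2 (almost constant sum). Then V(u) = ∑_i (u_i − ρ_i log u_i) is a strict Lyapunov function for the replicator equation: along any interior solution, dV/dt = ∑_{i<j}(u_i−ρ_i)(H_{ij}+H_{ji})(u_j−ρ_j) ≤ −(γ/2 − max|η_{ij}|)·∑_i (u_i−ρ_i)² ≤ 0, with equality only at u = ρ. -/
/-! With `x = u - ρ`, the constraint `∑ x = 0` and the constancy of `Hρ` make the derivative of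
`V` along the replicator flow equal to the quadratic form `xᵀHx`, which for zero diagonal is the
sum over `i < j` in the statement. Writing `Hᵢⱼ + Hⱼᵢ = γ + ηᵢⱼ`, the constant part contributes
`γ ∑_{i<j} xᵢxⱼ = -(γ/2) ∑ xᵢ²`, and each perturbation term obeys
`|ηᵢⱼ xᵢxⱼ| ≤ M (xᵢ² + xⱼ²)/2`, which over `n` strategies costs `(n - 1) M/2 · ∑ xᵢ²`: this is
`M` for `n = 3`. -/

open Finset Matrix

variable {ι : Type*} [Fintype ι]

theorem hasDerivAt_sum_sub_mul_log {u : ℝ → ι → ℝ} {g ρ : ι → ℝ} {t : ℝ}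
    (hne : ∀ i, u t i ≠ 0) (hu : ∀ i, HasDerivAt (fun s => u s i) (u t i * g i) t) :
    HasDerivAt (fun s => ∑ i, (u s i - ρ i * Real.log (u s i)))
      (∑ i, (u t i - ρ i) * g i) t := by
  refine HasDerivAt.fun_sum fun i _ => ?_
  refine ((hu i).fun_sub (((hu i).log (hne i)).const_mul (ρ i))).congr_deriv ?_
  field_simp [hne i]

theorem dotProduct_eq_zero_of_sum_eq_zero {x w : ι → ℝ} {k : ℝ} (hx : ∑ i, x i = 0)
    (hw : ∀ i, w i = k) : x ⬝ᵥ w = 0 := by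
  simp only [dotProduct, hw, ← sum_mul, hx, zero_mul]

theorem sum_sub_mul_mulVec_sub_eq {H : Matrix ι ι ℝ} {u ρ : ι → ℝ} {k : ℝ}
    (hsum : ∑ i, u i = ∑ i, ρ i) (hρ : ∀ i, (H *ᵥ ρ) i = k) (c : ℝ) :
    ∑ i, (u i - ρ i) * ((H *ᵥ u) i - c) = (u - ρ) ⬝ᵥ H *ᵥ (u - ρ) := by
  have hx : ∑ i, (u - ρ) i = 0 := by simp [sum_sub_distrib, hsum]
  rw [mulVec_sub, dotProduct_sub, dotProduct_eq_zero_of_sum_eq_zero hx hρ, sub_zero]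
  simp only [dotProduct, Pi.sub_apply, mul_sub, sum_sub_distrib, ← sum_mul] at hx ⊢
  rw [hx, zero_mul, sub_zero]

theorem sum_ite_lt_eq_dotProduct_mulVec [LinearOrder ι] {H : Matrix ι ι ℝ}
    (hdiag : ∀ i, H i i = 0) (x : ι → ℝ) :
    (∑ i, ∑ j, if i < j then x i * (H i j + H j i) * x j else 0) = x ⬝ᵥ H *ᵥ x := by
  calc (∑ i, ∑ j, if i < j then x i * (H i j + H j i) * x j else 0)
      = ∑ i, ∑ j, ((if i < j then x i * H i j * x j else 0)
          + if i < j then x j * H j i * x i else 0) := by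
        refine sum_congr rfl fun i _ => sum_congr rfl fun j _ => ?_
        split_ifs <;> ring
    _ = ∑ i, ∑ j, ((if i < j then x i * H i j * x j else 0)
          + if j < i then x i * H i j * x j else 0) := by
        simp only [sum_add_distrib]
        rw [sum_comm (f := fun i j => if i < j then x j * H j i * x i else 0)]
    _ = ∑ i, ∑ j, x i * H i j * x j := by
        refine sum_congr rfl fun i _ => sum_congr rfl fun j _ => ?_
        rcases lt_trichotomy i j with h | rfl | h
        · simp [h, h.not_gt]
        · simp [hdiag]
        · simp [h, h.not_gt]
    _ = x ⬝ᵥ H *ᵥ x := by simp only [dotProduct, mulVec, mul_sum, mul_assoc]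

theorem mul_mul_le_of_abs_sub_le {a γ M : ℝ} (ha : |a - γ| ≤ M) (x y : ℝ) :
    x * a * y ≤ γ * (x * y) + M / 2 * (x ^ 2 + y ^ 2) := by
  obtain ⟨h₁, h₂⟩ := abs_le.mp ha
  nlinarith [mul_nonneg (sub_nonneg.mpr h₂) (sq_nonneg (x + y)),
    mul_nonneg (neg_le_iff_add_nonneg.mp h₁) (sq_nonneg (x - y))]

theorem two_mul_dotProduct_mulVec_self (H : Matrix ι ι ℝ) (x : ι → ℝ) :
    2 * (x ⬝ᵥ H *ᵥ x) = ∑ i, ∑ j, x i * (H i j + H j i) * x j := by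
  have hq : x ⬝ᵥ H *ᵥ x = ∑ i, ∑ j, x i * H i j * x j := by
    simp only [dotProduct, mulVec, mul_sum, mul_assoc]
  rw [two_mul]
  simp only [mul_add, add_mul, sum_add_distrib]
  congr 1
  rw [hq, sum_comm]
  exact sum_congr rfl fun i _ => sum_congr rfl fun j _ => by ring

theorem dotProduct_mulVec_le_of_abs_add_sub_le [DecidableEq ι] {H : Matrix ι ι ℝ} {γ M : ℝ}
    (hdiag : ∀ i, H i i = 0) (hη : ∀ i j, i ≠ j → |H i j + H j i - γ| ≤ M)
    {x : ι → ℝ} (hx : ∑ i, x i = 0) :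
    x ⬝ᵥ H *ᵥ x ≤ -(γ / 2 - (Fintype.card ι - 1) * M / 2) * ∑ i, x i ^ 2 := by
  have hterm : ∀ i j, x i * (H i j + H j i) * x j ≤
      γ * (x i * x j) + M / 2 * (x i ^ 2 + x j ^ 2) - if i = j then (γ + M) * x i ^ 2 else 0 := by
    intro i j
    by_cases hij : i = j
    · subst hij
      simp only [hdiag, if_true]
      exact le_of_eq (by ring)
    · simpa [hij] using mul_mul_le_of_abs_sub_le (hη i j hij) (x i) (x j)
  have hsum : ∑ i, ∑ j, (γ * (x i * x j) + M / 2 * (x i ^ 2 + x j ^ 2) -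
      if i = j then (γ + M) * x i ^ 2 else 0) = ((Fintype.card ι - 1) * M - γ) * ∑ i, x i ^ 2 := by
    simp only [sum_sub_distrib, sum_add_distrib, sum_const, card_univ, nsmul_eq_mul, ← mul_sum,
      ← sum_mul, sum_ite_eq, mem_univ, if_true, hx]
    ring
  have := sum_le_sum fun i (_ : i ∈ univ) => sum_le_sum fun j (_ : j ∈ univ) => hterm i j
  rw [← two_mul_dotProduct_mulVec_self, hsum] at this
  linear_combination this / 2

theorem almost_constant_sum_lyapunov_general
    (H : Matrix (Fin 3) (Fin 3) ℝ) (γ M : ℝ) (hM : M < γ / 2)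
    (hdiag : ∀ i, H i i = 0)
    (hη : ∀ i j, i ≠ j → |H i j + H j i - γ| ≤ M)
    (ρ : Fin 3 → ℝ) (hρsum : ∑ i, ρ i = 1)
    (hρfix : H.mulVec ρ 0 = H.mulVec ρ 1 ∧ H.mulVec ρ 1 = H.mulVec ρ 2)
    (u : ℝ → Fin 3 → ℝ)
    (hupos : ∀ t i, 0 < u t i) (husum : ∀ t, ∑ i, u t i = 1)
    (hu : ∀ t i, HasDerivAt (fun s => u s i)
      (u t i * (H.mulVec (u t) i - ∑ j, ∑ k, u t j * H j k * u t k)) t) :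
    ∀ t,
      HasDerivAt (fun s => ∑ i, (u s i - ρ i * Real.log (u s i)))
        (∑ i, ∑ j, if i < j then
          (u t i - ρ i) * (H i j + H j i) * (u t j - ρ j) else 0) t ∧
      (∑ i, ∑ j, if i < j then
          (u t i - ρ i) * (H i j + H j i) * (u t j - ρ j) else 0)
        ≤ -(γ / 2 - M) * ∑ i, (u t i - ρ i) ^ 2 ∧
      ((∑ i, ∑ j, if i < j then
          (u t i - ρ i) * (H i j + H j i) * (u t j - ρ j) else 0) = 0 →
        ∀ i, u t i = ρ i) := by
  intro t
  have hρconst : ∀ i, (H *ᵥ ρ) i = (H *ᵥ ρ) 0 := by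
    intro i; fin_cases i <;> simp [hρfix.1, hρfix.2]
  have hform : (∑ i, ∑ j, if i < j then
      (u t i - ρ i) * (H i j + H j i) * (u t j - ρ j) else 0) = (u t - ρ) ⬝ᵥ H *ᵥ (u t - ρ) :=
    sum_ite_lt_eq_dotProduct_mulVec hdiag (u t - ρ)
  have hbound : (u t - ρ) ⬝ᵥ H *ᵥ (u t - ρ) ≤ -(γ / 2 - M) * ∑ i, (u t i - ρ i) ^ 2 := by
    have := dotProduct_mulVec_le_of_abs_add_sub_le hdiag hη (x := u t - ρ)
      (by simp [sum_sub_distrib, husum, hρsum])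
    simp only [Fintype.card_fin, Nat.cast_ofNat, Pi.sub_apply] at this
    linear_combination this
  refine ⟨?_, hform ▸ hbound, fun h0 => ?_⟩
  · rw [hform, ← sum_sub_mul_mulVec_sub_eq (by rw [husum, hρsum]) hρconst]
    exact hasDerivAt_sum_sub_mul_log (fun i => (hupos t i).ne') (hu t)
  · rw [hform] at h0
    have hsq : ∑ i, (u t i - ρ i) ^ 2 = 0 := by
      have := sum_nonneg fun i (_ : i ∈ univ) => sq_nonneg (u t i - ρ i)
      nlinarith [h0 ▸ hbound]
    intro i
    have := (sum_eq_zero_iff_of_nonneg fun i _ => sq_nonneg (u t i - ρ i)).mp hsq i (mem_univ i)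
    exact sub_eq_zero.mp (pow_eq_zero_iff two_ne_zero |>.mp this)

/-- **Almost-constant-sum games: strict Lyapunov function.**
Let `H` be a 3×3 game with zero diagonal, interior equilibrium `ρ`, and
`Hᵢⱼ + Hⱼᵢ = γ + ηᵢⱼ` for `i ≠ j` with `γ > 0` and `max|ηᵢⱼ| ≤ M < γ/2`.  Then
`V(u) = ∑ᵢ (uᵢ − ρᵢ log uᵢ)` is a strict Lyapunov function for the replicator equation:
along any interior solution, `dV/dt = ∑_{i<j} (uᵢ−ρᵢ)(Hᵢⱼ+Hⱼᵢ)(uⱼ−ρⱼ)`, which is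
`≤ −(γ/2 − M)·∑ᵢ (uᵢ−ρᵢ)² ≤ 0`, with equality only at `u = ρ`. -/
theorem almost_constant_sum_lyapunov
    (H : Matrix (Fin 3) (Fin 3) ℝ) (γ M : ℝ) (hγ : 0 < γ) (hM : M < γ / 2)
    (hdiag : ∀ i, H i i = 0)
    (hη : ∀ i j, i ≠ j → |H i j + H j i - γ| ≤ M)
    (ρ : Fin 3 → ℝ) (hρpos : ∀ i, 0 < ρ i) (hρsum : ∑ i, ρ i = 1)
    (hρfix : H.mulVec ρ 0 = H.mulVec ρ 1 ∧ H.mulVec ρ 1 = H.mulVec ρ 2)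
    (u : ℝ → Fin 3 → ℝ)
    (hupos : ∀ t i, 0 < u t i) (husum : ∀ t, ∑ i, u t i = 1)
    (hu : ∀ t i, HasDerivAt (fun s => u s i)
      (u t i * (H.mulVec (u t) i - ∑ j, ∑ k, u t j * H j k * u t k)) t) :
    ∀ t,
      HasDerivAt (fun s => ∑ i, (u s i - ρ i * Real.log (u s i)))
        (∑ i, ∑ j, if i < j then
          (u t i - ρ i) * (H i j + H j i) * (u t j - ρ j) else 0) t ∧
      (∑ i, ∑ j, if i < j then
          (u t i - ρ i) * (H i j + H j i) * (u t j - ρ j) else 0)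
        ≤ -(γ / 2 - M) * ∑ i, (u t i - ρ i) ^ 2 ∧
      ((∑ i, ∑ j, if i < j then
          (u t i - ρ i) * (H i j + H j i) * (u t j - ρ j) else 0) = 0 →
        ∀ i, u t i = ρ i) :=
  almost_constant_sum_lyapunov_general H γ M hM hdiag hη ρ hρsum hρfix u hupos husum hu
end

section
/- For Death-Birth updating with p̄₁ + 2p̄₂ = (1+1/κ)p(v₁|v₂) and μ = p̄₂/p̄₁, ν = p(v₁|v₂)/(κp̄₁), one has the identity (1+2μ)/(1+2(μ−ν)) = (κ+1)/(κ−1). Consequently, the condition for strategy 1 to be favored, (1+2μ)R + (1+2(μ−ν))S > (1+2(μ−ν))T + (1+2μ)P, is equivalent to Tarnita's condition σR + S > T + σP with σ = (κ+1)/(κ−1). -/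
/-! Both payoff weights are multiples of `c = p(v₁|v₂)/(κ p̄₁)`: the constraint gives
`1 + 2μ = (κ+1)c`, hence `1 + 2(μ−ν) = (κ−1)c`. Dividing the favoring condition by the
positive weight `1 + 2(μ−ν)` turns it into Tarnita's condition with `σ` the ratio of weights. -/

theorem gt_iff_div_weighted {x y : ℝ} (hy : 0 < y) (R S T P : ℝ) :
    x * R + y * S > y * T + x * P ↔ (x / y) * R + S > T + (x / y) * P := by
  have hlhs : (x / y) * R + S = (x * R + y * S) / y := by field_simp
  have hrhs : T + (x / y) * P = (y * T + x * P) / y := by field_simp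
  rw [hlhs, hrhs, gt_iff_lt, gt_iff_lt, div_lt_div_iff_of_pos_right hy]

theorem one_add_two_mul_div_eq {κ p1 p2 pv : ℝ} (hκ : κ ≠ 0) (hp1 : p1 ≠ 0)
    (hid : 2 * p2 + p1 = (1 + 1 / κ) * pv) :
    1 + 2 * (p2 / p1) = (κ + 1) * (pv / (κ * p1)) := by
  field_simp at hid ⊢
  linear_combination hid

theorem tarnita_sigma_death_birth_general
    (κ p1 p2 pv : ℝ) (hκ : 1 < κ)
    (hp1 : 0 < p1) (hpv : 0 < pv)
    (hid : 2 * p2 + p1 = (1 + 1 / κ) * pv)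
    (μ ν : ℝ) (hμ : μ = p2 / p1) (hν : ν = pv / (κ * p1)) :
    (1 + 2 * μ) / (1 + 2 * (μ - ν)) = (κ + 1) / (κ - 1) ∧
    (∀ R S T P : ℝ,
      ((1 + 2 * μ) * R + (1 + 2 * (μ - ν)) * S
          > (1 + 2 * (μ - ν)) * T + (1 + 2 * μ) * P ↔
        ((κ + 1) / (κ - 1)) * R + S > T + ((κ + 1) / (κ - 1)) * P)) := by
  have hκ0 : 0 < κ := one_pos.trans hκ
  have hc : 0 < pv / (κ * p1) := by positivity
  have h1 : 1 + 2 * μ = (κ + 1) * (pv / (κ * p1)) :=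
    hμ ▸ one_add_two_mul_div_eq hκ0.ne' hp1.ne' hid
  have h2 : 1 + 2 * (μ - ν) = (κ - 1) * (pv / (κ * p1)) := by
    rw [hν]; linear_combination h1
  have hratio : (1 + 2 * μ) / (1 + 2 * (μ - ν)) = (κ + 1) / (κ - 1) := by
    rw [h1, h2, mul_div_mul_right _ _ hc.ne']
  have hweight : 0 < 1 + 2 * (μ - ν) := h2 ▸ mul_pos (sub_pos.2 hκ) hc
  exact ⟨hratio, fun R S T P => hratio ▸ gt_iff_div_weighted hweight R S T P⟩

/-- **Tarnita's σ for Death-Birth updating equals `(κ+1)/(κ−1)`.**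
With `p̄₁, p̄₂, p(v₁|v₂) > 0` satisfying `2p̄₂ + p̄₁ = (1+1/κ)·p(v₁|v₂)` and
`μ = p̄₂/p̄₁`, `ν = p(v₁|v₂)/(κ·p̄₁)`, one has `(1+2μ)/(1+2(μ−ν)) = (κ+1)/(κ−1)`;
consequently the condition `(1+2μ)R + (1+2(μ−ν))S > (1+2(μ−ν))T + (1+2μ)P` for strategy 1
to be favored is equivalent to Tarnita's condition `σR + S > T + σP` with
`σ = (κ+1)/(κ−1)`. -/
theorem tarnita_sigma_death_birth
    (κ p1 p2 pv : ℝ) (hκ : 1 < κ)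
    (hp1 : 0 < p1) (hp2 : 0 < p2) (hpv : 0 < pv)
    (hid : 2 * p2 + p1 = (1 + 1 / κ) * pv)
    (μ ν : ℝ) (hμ : μ = p2 / p1) (hν : ν = pv / (κ * p1)) :
    (1 + 2 * μ) / (1 + 2 * (μ - ν)) = (κ + 1) / (κ - 1) ∧
    (∀ R S T P : ℝ,
      ((1 + 2 * μ) * R + (1 + 2 * (μ - ν)) * S
          > (1 + 2 * (μ - ν)) * T + (1 + 2 * μ) * P ↔
        ((κ + 1) / (κ - 1)) * R + S > T + ((κ + 1) / (κ - 1)) * P)) :=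
  tarnita_sigma_death_birth_general κ p1 p2 pv hκ hp1 hpv hid μ ν hμ hν
end
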